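/- The uniform deviation function Φ(A,B) = sup_{x ∈ X} |f(x) − (Aᵀ G(x))/(Bᵀ H(x))| is quasiconvex on the set D = {(A,B) : Bᵀ H(x) > 0 for all x ∈ X}, where X is a nonempty set. -/

import Mathlib

/-! Each term `p ↦ |f x - ⟨A, G x⟩ / ⟨B, H x⟩|` has convex sublevel sets on `D`: clearing the
positive denominator, `|c - num / den| ≤ r` becomes the pair of linear inequalities
`(c - r) den ≤ num ≤ (c + r) den`. A sublevel set of a (bounded) pointwise supremum is the
intersection of the sublevel sets of its terms, hence convex. -/

open Set Matrix

theorem abs_sub_div_le_iff {𝕜 : Type*} [Field 𝕜] [LinearOrder 𝕜] [IsStrictOrderedRing 𝕜]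
    {c n d r : 𝕜} (hd : 0 < d) :
    |c - n / d| ≤ r ↔ (c - r) * d ≤ n ∧ n ≤ (c + r) * d := by
  rw [abs_sub_le_iff, ← le_div_iff₀ hd, ← div_le_iff₀ hd]
  constructor <;> rintro ⟨h₁, h₂⟩ <;> constructor <;> linarith

theorem quasiconvexOn_ciSup {𝕜 E β ι : Type*} [Semiring 𝕜] [PartialOrder 𝕜] [AddCommMonoid E]
    [SMul 𝕜 E] [ConditionallyCompleteLattice β] [Nonempty ι] {s : Set E} {f : ι → E → β}
    (hf : ∀ i, QuasiconvexOn 𝕜 s (f i)) (hbdd : ∀ p ∈ s, BddAbove (range fun i => f i p)) :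
    QuasiconvexOn 𝕜 s fun p => ⨆ i, f i p := by
  intro r
  have hsub : {p ∈ s | ⨆ i, f i p ≤ r} = ⋂ i, {p ∈ s | f i p ≤ r} := by
    ext p
    simp only [mem_ofPred_eq, mem_iInter]
    constructor
    · rintro ⟨hp, hle⟩ i
      exact ⟨hp, (ciSup_le_iff (hbdd p hp)).mp hle i⟩
    · intro h
      have hp := (h (Classical.arbitrary ι)).1
      exact ⟨hp, (ciSup_le_iff (hbdd p hp)).mpr fun i => (h i).2⟩
  rw [hsub]
  exact convex_iInter fun i => hf i r

theorem quasiconvexOn_abs_sub_div {𝕜 E : Type*} [Field 𝕜] [LinearOrder 𝕜]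
    [IsStrictOrderedRing 𝕜] [AddCommGroup E] [Module 𝕜 E] {s : Set E} (hs : Convex 𝕜 s)
    (num den : E →ₗ[𝕜] 𝕜) (hden : ∀ p ∈ s, 0 < den p) (c : 𝕜) :
    QuasiconvexOn 𝕜 s fun p => |c - num p / den p| := by
  intro r
  have hsub : {p ∈ s | |c - num p / den p| ≤ r} =
      s ∩ {p | ((c - r) • den - num) p ≤ 0} ∩ {p | (num - (c + r) • den) p ≤ 0} := by
    ext p
    simp only [mem_ofPred_eq, mem_inter_iff, LinearMap.sub_apply, LinearMap.smul_apply,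
      smul_eq_mul, sub_nonpos]
    constructor
    · rintro ⟨hp, hle⟩
      obtain ⟨hlo, hhi⟩ := (abs_sub_div_le_iff (hden p hp)).mp hle
      exact ⟨⟨hp, hlo⟩, hhi⟩
    · rintro ⟨⟨hp, hlo⟩, hhi⟩
      exact ⟨hp, (abs_sub_div_le_iff (hden p hp)).mpr ⟨hlo, hhi⟩⟩
  rw [hsub]
  exact (hs.inter (convex_halfSpace_le (LinearMap.isLinear _) 0)).inter
    (convex_halfSpace_le (LinearMap.isLinear _) 0)

/-- The uniform deviation `Φ(A,B) = sup_{x∈X} |f x − (AᵀG x)/(BᵀH x)|` is quasiconvex on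
`D = {(A,B) : BᵀH x > 0 for all x}`, assuming the supremum is finite on `D`. -/
theorem stmt_1 {ι : Type*} [Nonempty ι] (n m : ℕ) (f : ι → ℝ)
    (G : ι → Fin (n + 1) → ℝ) (H : ι → Fin (m + 1) → ℝ)
    (D : Set ((Fin (n + 1) → ℝ) × (Fin (m + 1) → ℝ)))
    (hD : D = {p | ∀ x, 0 < ∑ j, p.2 j * H x j})
    (hbdd : ∀ p ∈ D, BddAbove (Set.range fun x =>
      |f x - (∑ i, p.1 i * G x i) / (∑ j, p.2 j * H x j)|)) :
    QuasiconvexOn ℝ D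
      (fun p => ⨆ x, |f x - (∑ i, p.1 i * G x i) / (∑ j, p.2 j * H x j)|) := by
  let num x := (dotProductBilin ℝ ℝ).flip (G x) ∘ₗ LinearMap.fst ℝ _ (Fin (m + 1) → ℝ)
  let den x := (dotProductBilin ℝ ℝ).flip (H x) ∘ₗ LinearMap.snd ℝ (Fin (n + 1) → ℝ) _
  have hden : ∀ x, ∀ p ∈ D, 0 < den x p := fun x p hp => by subst hD; exact hp x
  have hconv : Convex ℝ D := by
    rw [hD, ofPred_forall]
    exact convex_iInter fun x => convex_halfSpace_gt (den x).isLinear 0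
  exact quasiconvexOn_ciSup
    (fun x => quasiconvexOn_abs_sub_div hconv (num x) (den x) (hden x) (f x)) hbdd
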